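/- arXiv:1806.10862 — 4 statements merged into one kernel-verified Lean document; each statement's English description precedes it below -/
import Mathlib

section
/- In the group algebra of G(m,1,n) = S_n ⋉ (Z/mZ)^n, the Jucys–Murphy elements M_i = Σ_{k<i} Σ_{s=0}^{m-1} (k,i) g_k^{-s} g_i^{s} pairwise commute: [M_i, M_j] = 0 for all i, j. -/
open scoped BigOperators
open SemidirectProduct

noncomputable section

def permAct (m n : ℕ) : Equiv.Perm (Fin n) →* MulAut (Fin n → Multiplicative (ZMod m)) where
  toFun σ :=
    { toFun := fun f => f ∘ σ.symm
      invFun := fun f => f ∘ σ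
      left_inv := fun f => by funext i; simp
      right_inv := fun f => by funext i; simp
      map_mul' := fun f g => rfl }
  map_one' := by ext f i; rfl
  map_mul' := fun σ τ => by ext f i; rfl

abbrev Gm (m n : ℕ) := (Fin n → Multiplicative (ZMod m)) ⋊[permAct m n] Equiv.Perm (Fin n)

/-- the order-m generator g_i -/
def gel (m n : ℕ) (i : Fin n) : Gm m n :=
  inl (Pi.mulSingle i (Multiplicative.ofAdd (1 : ZMod m)))

/-- the transposition (a b) -/
def tr (m n : ℕ) (a b : Fin n) : Gm m n := inr (Equiv.swap a b)

namespace JMaux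
variable (m n : ℕ)

lemma permAct_apply (σ : Equiv.Perm (Fin n)) (f : Fin n → Multiplicative (ZMod m)) :
    permAct m n σ f = f ∘ σ.symm := rfl

def A (c : ZMod m) (i : Fin n) : Fin n → Multiplicative (ZMod m) :=
  Pi.mulSingle i (Multiplicative.ofAdd c)

lemma gel_pow (i : Fin n) (s : ℕ) : (gel m n i) ^ s = inl (A m n (s : ZMod m) i) := by
  rw [gel, ← map_pow, A]
  congr 1
  funext p
  by_cases h : p = i <;>
    simp [h, Pi.mulSingle_apply, ← ofAdd_nsmul, nsmul_eq_mul]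

lemma gel_inv_pow (i : Fin n) (s : ℕ) :
    ((gel m n i)⁻¹) ^ s = inl (A m n (-(s : ZMod m)) i) := by
  rw [gel, ← map_inv, ← map_pow, A]
  congr 1
  funext p
  by_cases h : p = i <;>
    simp [h, Pi.mulSingle_apply, ← ofAdd_neg, ← ofAdd_nsmul, nsmul_eq_mul]

def X (j : Fin n) (c : ZMod m) (k : Fin n) : Gm m n :=
  tr m n k j * inl (A m n (-c) k * A m n c j)

lemma x_eq (k j : Fin n) (s : ℕ) :
    tr m n k j * ((gel m n k)⁻¹) ^ s * (gel m n j) ^ s = X m n j (s : ZMod m) k := by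
  rw [gel_inv_pow, gel_pow, X, mul_assoc, ← map_mul]

lemma G1 (j l k : Fin n) (c : ZMod m) (hlk : l ≠ k) (hlj : l ≠ j) :
    gel m n l * X m n j c k = X m n j c k * gel m n l := by
  ext p
  · simp [X, tr, gel, A, mul_left, mul_right, permAct_apply, Pi.mulSingle_apply,
      Equiv.swap_apply_def]
    split_ifs <;> first | rfl | (exfalso; subst_vars; simp_all)
  · simp [X, tr, gel, mul_right]

lemma G2 (j k : Fin n) (c : ZMod m) (hkj : k ≠ j) :
    gel m n k * X m n j c k = X m n j (c + 1) k * gel m n k := by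
  ext p
  · simp [X, tr, gel, A, mul_left, mul_right, permAct_apply, Pi.mulSingle_apply,
      Equiv.swap_apply_def, ← ofAdd_add]
    split_ifs <;> first | rfl | (exfalso; subst_vars; simp_all; done) | (congr 1; ring)
  · simp [X, tr, gel, mul_right]

lemma permAct_A (π : Equiv.Perm (Fin n)) (c : ZMod m) (p : Fin n) :
    permAct m n π (A m n c p) = A m n c (π p) := by
  funext q
  simp only [permAct_apply, A, Function.comp_apply, Pi.mulSingle_apply]
  by_cases h : q = π p
  · simp [h]
  · rw [if_neg h, if_neg]
    intro hc
    exact h (by rw [← hc]; simp)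

lemma inr_mul_inl (g : Equiv.Perm (Fin n)) (f : Fin n → Multiplicative (ZMod m)) :
    (inr g : Gm m n) * inl f = inl (permAct m n g f) * inr g := by
  rw [inl_aut, mul_assoc, ← map_mul, inv_mul_cancel, map_one, mul_one]

lemma G3 (j : Fin n) (τ : Equiv.Perm (Fin n)) (hτ : τ j = j) (c : ZMod m) (k : Fin n) :
    inr τ * X m n j c k = X m n j c (τ k) * inr τ := by
  have hconj : Equiv.swap (τ k) j * τ = τ * Equiv.swap k j := by
    conv_lhs => rw [← hτ, Equiv.swap_apply_apply]
    group
  have inrmul : ∀ a b : Equiv.Perm (Fin n), (inr a : Gm m n) * inr b = inr (a * b) :=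
    fun a b => (map_mul inr a b).symm
  have hmul : ∀ (α β : Equiv.Perm (Fin n)) f,
      permAct m n (α * β) f = permAct m n α (permAct m n β f) := fun _ _ _ => rfl
  rw [X, X, tr, tr, ← mul_assoc, inrmul, inr_mul_inl, inr_mul_inl, mul_assoc, inrmul, hconj]
  congr 1
  congr 1
  rw [hmul, map_mul, map_mul, map_mul, permAct_A, permAct_A, permAct_A, permAct_A]
  simp [permAct_A, Equiv.swap_apply_left, Equiv.swap_apply_right, hτ]


end JMaux


abbrev GA (m n : ℕ) := MonoidAlgebra ℂ (Gm m n)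

def emb (m n : ℕ) : Gm m n →* GA m n := MonoidAlgebra.of ℂ (Gm m n)

/-- Jucys–Murphy element M_i -/
def JM (m n : ℕ) (i : Fin n) : GA m n :=
  ∑ k ∈ Finset.univ.filter (fun k => k < i), ∑ s ∈ Finset.range m,
    emb m n (tr m n k i * ((gel m n k)⁻¹) ^ s * (gel m n i) ^ s)

/-- reverse Jucys–Murphy element -/
def JMr (m n : ℕ) (i : Fin n) : GA m n :=
  ∑ k ∈ Finset.univ.filter (fun k => i < k), ∑ s ∈ Finset.range m,
    emb m n (tr m n i k * ((gel m n i)⁻¹) ^ s * (gel m n k) ^ s)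
namespace JMaux
variable (m n : ℕ)

lemma JM_eq (j : Fin n) : JM m n j =
    ∑ k ∈ Finset.univ.filter (fun k => k < j), ∑ s ∈ Finset.range m,
      emb m n (X m n j (s : ZMod m) k) := by
  unfold JM
  simp_rw [x_eq]

lemma commute_inv (g : Gm m n) (a : GA m n) (h : Commute (emb m n g) a) :
    Commute (emb m n g⁻¹) a := by
  have h1 : emb m n g⁻¹ * emb m n g = 1 := by rw [← map_mul, inv_mul_cancel, map_one]
  have h2 : emb m n g * emb m n g⁻¹ = 1 := by rw [← map_mul, mul_inv_cancel, map_one]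
  unfold Commute SemiconjBy at h ⊢
  calc emb m n g⁻¹ * a = emb m n g⁻¹ * (a * (emb m n g * emb m n g⁻¹)) := by rw [h2, mul_one]
    _ = emb m n g⁻¹ * ((a * emb m n g) * emb m n g⁻¹) := by rw [mul_assoc a]
    _ = emb m n g⁻¹ * ((emb m n g * a) * emb m n g⁻¹) := by rw [h]
    _ = (emb m n g⁻¹ * emb m n g) * (a * emb m n g⁻¹) := by simp only [mul_assoc]
    _ = a * emb m n g⁻¹ := by rw [h1, one_mul]

lemma sum_shift (F : ZMod m → GA m n) :
    ∑ s ∈ Finset.range m, F ((s : ZMod m) + 1) = ∑ s ∈ Finset.range m, F (s : ZMod m) := by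
  have key : ∀ s : ℕ, F ((s : ZMod m) + 1) = F (((s + 1 : ℕ) : ZMod m)) := by
    intro s; congr 1; push_cast; ring
  simp_rw [key]
  have h1 := Finset.sum_range_succ' (fun s => F (s : ZMod m)) m
  have h2 := Finset.sum_range_succ (fun s => F (s : ZMod m)) m
  have h3 : F ((m : ZMod m)) = F (((0 : ℕ) : ZMod m)) := by rw [ZMod.natCast_self]; norm_num
  rw [h2, h3] at h1
  exact (add_right_cancel h1).symm

lemma commute_gel (j l : Fin n) (hl : l < j) : Commute (emb m n (gel m n l)) (JM m n j) := by
  unfold Commute SemiconjBy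
  rw [JM_eq, Finset.mul_sum, Finset.sum_mul]
  refine Finset.sum_congr rfl (fun k hk => ?_)
  rw [Finset.mul_sum, Finset.sum_mul]
  rw [Finset.mem_filter] at hk
  by_cases hkl : k = l
  · subst hkl
    have step : ∀ s : ℕ, emb m n (gel m n k) * emb m n (X m n j (s : ZMod m) k)
        = emb m n (X m n j ((s : ZMod m) + 1) k) * emb m n (gel m n k) := by
      intro s
      rw [← map_mul, ← map_mul, G2 m n j k _ (ne_of_lt hl)]
    simp_rw [step]
    exact sum_shift m n (fun c => emb m n (X m n j c k) * emb m n (gel m n k))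
  · refine Finset.sum_congr rfl (fun s _ => ?_)
    rw [← map_mul, ← map_mul, G1 m n j l k _ (fun h => hkl h.symm) (ne_of_lt hl)]

lemma commute_swap (j : Fin n) (τ : Equiv.Perm (Fin n)) (hτj : τ j = j)
    (hτ : ∀ k, k < j → τ k < j) (hτ' : ∀ k, k < j → τ.symm k < j) :
    Commute (emb m n (inr τ)) (JM m n j) := by
  unfold Commute SemiconjBy
  rw [JM_eq, Finset.mul_sum, Finset.sum_mul]
  have step : ∀ (k : Fin n) (s : ℕ), emb m n (inr τ) * emb m n (X m n j (s : ZMod m) k)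
      = emb m n (X m n j (s : ZMod m) (τ k)) * emb m n (inr τ) := by
    intro k s
    rw [← map_mul, ← map_mul, G3 m n j τ hτj]
  simp_rw [Finset.mul_sum, Finset.sum_mul, step]
  refine Finset.sum_nbij' (fun k => τ k) (fun k => τ.symm k) ?_ ?_ ?_ ?_ ?_
  · intro a ha
    rw [Finset.mem_filter] at ha ⊢
    exact ⟨Finset.mem_univ _, hτ a ha.2⟩
  · intro a ha
    rw [Finset.mem_filter] at ha ⊢
    exact ⟨Finset.mem_univ _, hτ' a ha.2⟩
  · intro a _; simp
  · intro a _; simp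
  · intro a _; rfl

lemma commute_tr (j a b : Fin n) (ha : a < j) (hb : b < j) :
    Commute (emb m n (tr m n a b)) (JM m n j) := by
  have hja : j ≠ a := ne_of_gt ha
  have hjb : j ≠ b := ne_of_gt hb
  refine commute_swap m n j _ (Equiv.swap_apply_of_ne_of_ne hja hjb) ?_ ?_
  · intro k hk
    rcases Equiv.swap_apply_def a b k with _
    by_cases h1 : k = a
    · simpa [h1] using hb
    · by_cases h2 : k = b
      · simpa [h2] using ha
      · rwa [Equiv.swap_apply_of_ne_of_ne h1 h2]
  · intro k hk
    rw [Equiv.symm_swap]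
    by_cases h1 : k = a
    · simpa [h1] using hb
    · by_cases h2 : k = b
      · simpa [h2] using ha
      · rwa [Equiv.swap_apply_of_ne_of_ne h1 h2]

lemma key (i j : Fin n) (hij : i < j) : Commute (JM m n i) (JM m n j) := by
  unfold JM
  apply Commute.sum_left
  intro k hk
  rw [Finset.mem_filter] at hk
  apply Commute.sum_left
  intro s _
  rw [map_mul, map_mul, map_pow, map_pow]
  have h1 : Commute (emb m n (tr m n k i)) (JM m n j) :=
    commute_tr m n j k i (hk.2.trans hij) hij
  have h2 : Commute (emb m n ((gel m n k)⁻¹)) (JM m n j) :=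
    commute_inv m n (gel m n k) (JM m n j) (commute_gel m n j k (hk.2.trans hij))
  have h3 : Commute (emb m n (gel m n i)) (JM m n j) := commute_gel m n j i hij
  exact ((h1.mul_left (h2.pow_left s)).mul_left (h3.pow_left s))

end JMaux

/-- The Jucys–Murphy elements of `G(m,1,n)` pairwise commute. -/
theorem jucysMurphy_commute (m n : ℕ) (i j : Fin n) :
    JM m n i * JM m n j = JM m n j * JM m n i := by
  rcases lt_trichotomy i j with h | h | h
  · exact (JMaux.key m n i j h).eq
  · rw [h]
  · exact (JMaux.key m n j i h).eq.symm
end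
end

section
/- In the group algebra of G(m,1,n), the reverse Jucys–Murphy elements underline{M}_i = Σ_{k>i} Σ_{s=0}^{m-1} (i,k) g_i^{-s} g_k^{s} pairwise commute: [underline{M}_i, underline{M}_j] = 0 for all i, j. -/
open scoped BigOperators
open SemidirectProduct

noncomputable section

namespace RevJM

variable {m n : ℕ}

/-- the diagonal part of a reflection -/
def F (m n : ℕ) (k l : Fin n) (c : ZMod m) : Fin n → Multiplicative (ZMod m) :=
  fun x => Multiplicative.ofAdd (if x = k then -c else if x = l then c else 0)

/-- a reflection -/
def R (m n : ℕ) (k l : Fin n) (c : ZMod m) : Gm m n := ⟨F m n k l c, Equiv.swap k l⟩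

lemma permAct_apply (σ : Equiv.Perm (Fin n)) (f : Fin n → Multiplicative (ZMod m)) (x : Fin n) :
    (permAct m n σ) f x = f (σ.symm x) := rfl

lemma R_symm {k l : Fin n} (hkl : k ≠ l) (c : ZMod m) :
    R m n k l c = R m n l k (-c) := by
  unfold R
  congr 1
  · funext x
    unfold F
    by_cases h1 : x = k <;> by_cases h2 : x = l <;>
      simp [h1, h2, hkl, hkl.symm]
  · exact Equiv.swap_comm k l

lemma term_eq {k l : Fin n} (hkl : k ≠ l) (s : ℕ) :
    tr m n k l * ((gel m n k)⁻¹) ^ s * (gel m n l) ^ s = R m n k l (-(s : ZMod m)) := by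
  have h1 : ((gel m n k)⁻¹) ^ s
      = inl ((Pi.mulSingle k (Multiplicative.ofAdd (1 : ZMod m)))⁻¹ ^ s) := by
    rw [gel, ← map_inv, ← map_pow]
  have h2 : (gel m n l) ^ s
      = inl ((Pi.mulSingle l (Multiplicative.ofAdd (1 : ZMod m))) ^ s) := by
    rw [gel, ← map_pow]
  rw [h1, h2, tr]
  refine SemidirectProduct.ext ?_ ?_
  · simp only [mul_left, left_inr, left_inl, mul_right, right_inr, right_inl, one_mul, mul_one,
      map_one, R]
    funext x
    simp only [Pi.mul_apply, permAct_apply, Equiv.symm_swap]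
    unfold F
    simp only [Pi.pow_apply, Pi.inv_apply]
    rcases eq_or_ne x k with rfl | hxk
    · rw [Equiv.swap_apply_left]
      simp [hkl.symm, Pi.mulSingle_eq_of_ne, ← ofAdd_nsmul, nsmul_eq_mul]
    · rcases eq_or_ne x l with rfl | hxl
      · rw [Equiv.swap_apply_right]
        simp [hkl, hxk, Pi.mulSingle_eq_of_ne, ← ofAdd_nsmul, nsmul_eq_mul, ← ofAdd_neg]
      · rw [Equiv.swap_apply_of_ne_of_ne hxk hxl]
        simp [hxk, hxl, Pi.mulSingle_eq_of_ne]
  · simp only [mul_right, right_inr, right_inl, mul_one, R]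



lemma conj (e : Fin n → Multiplicative (ZMod m)) (τ : Equiv.Perm (Fin n)) {k l : Fin n}
    (hkl : k ≠ l) (c : ZMod m) :
    (⟨e, τ⟩ : Gm m n) * R m n k l c
      = R m n (τ k) (τ l)
          (c + Multiplicative.toAdd (e (τ l)) - Multiplicative.toAdd (e (τ k))) * ⟨e, τ⟩ := by
  have hτkl : τ k ≠ τ l := fun h => hkl (τ.injective h)
  refine SemidirectProduct.ext ?_ ?_
  · simp only [mul_left, R]
    funext x
    simp only [Pi.mul_apply, permAct_apply, Equiv.symm_swap]
    unfold F
    simp only [Equiv.symm_apply_eq]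
    rcases eq_or_ne x (τ k) with rfl | hxk
    · rw [Equiv.swap_apply_left, if_pos rfl, if_pos rfl]
      apply Multiplicative.toAdd.injective
      simp only [toAdd_mul, toAdd_ofAdd]
      ring
    · rcases eq_or_ne x (τ l) with rfl | hxl
      · rw [Equiv.swap_apply_right, if_neg hxk, if_neg hxk, if_pos rfl, if_pos rfl]
        apply Multiplicative.toAdd.injective
        simp only [toAdd_mul, toAdd_ofAdd]
        ring
      · rw [Equiv.swap_apply_of_ne_of_ne hxk hxl, if_neg hxk, if_neg hxk,
          if_neg hxl, if_neg hxl]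
        simp
  · simp only [mul_right, R]
    rw [Equiv.swap_apply_apply]
    group

section mpos

variable [NeZero m]

lemma sum_range_zmod {β : Type*} [AddCommMonoid β] (f : ZMod m → β) :
    ∑ s ∈ Finset.range m, f ((s : ZMod m)) = ∑ c : ZMod m, f c := by
  refine Finset.sum_nbij' (fun s => (s : ZMod m)) (fun c => c.val) ?_ ?_ ?_ ?_ ?_
  · intro a _; exact Finset.mem_univ _
  · intro c _; exact Finset.mem_range.2 (ZMod.val_lt c)
  · intro a ha; exact ZMod.val_cast_of_lt (Finset.mem_range.1 ha)
  · intro c _; exact ZMod.natCast_rightInverse c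
  · intro a _; rfl

lemma sum_zmod_neg {β : Type*} [AddCommMonoid β] (f : ZMod m → β) :
    ∑ c : ZMod m, f (-c) = ∑ c : ZMod m, f c :=
  Fintype.sum_equiv (Equiv.neg (ZMod m)) _ _ (fun c => rfl)

lemma JMr_eq (i : Fin n) :
    JMr m n i = ∑ k ∈ Finset.univ.filter (fun k => i < k), ∑ c : ZMod m,
      emb m n (R m n i k c) := by
  unfold JMr
  refine Finset.sum_congr rfl fun k hk => ?_
  have hik : i ≠ k := ne_of_lt (Finset.mem_filter.1 hk).2
  calc ∑ s ∈ Finset.range m, emb m n (tr m n i k * ((gel m n i)⁻¹) ^ s * (gel m n k) ^ s)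
      = ∑ s ∈ Finset.range m, emb m n (R m n i k (-((s : ℕ) : ZMod m))) := by
        exact Finset.sum_congr rfl fun s _ => by rw [term_eq hik]
    _ = ∑ c : ZMod m, emb m n (R m n i k (-c)) := sum_range_zmod (fun c => emb m n (R m n i k (-c)))
    _ = ∑ c : ZMod m, emb m n (R m n i k c) :=
        sum_zmod_neg (fun c => emb m n (R m n i k c))

/-- index set for the partial central elements -/
def Q (m n : ℕ) [NeZero m] (p : ℕ) : Finset ((Fin n × Fin n) × ZMod m) :=
  Finset.univ.filter (fun y => p ≤ (y.1.1 : ℕ) ∧ p ≤ (y.1.2 : ℕ) ∧ y.1.1 ≠ y.1.2)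

/-- partial central element: sum of all reflections supported on indices `≥ p` -/
def Zo (m n : ℕ) [NeZero m] (p : ℕ) : GA m n :=
  ∑ y ∈ Q m n p, emb m n (R m n y.1.1 y.1.2 y.2)

lemma emb_mk_comm_Zo (p : ℕ) (e : Fin n → Multiplicative (ZMod m)) (τ : Equiv.Perm (Fin n))
    (hτ : ∀ x : Fin n, (x : ℕ) < p → τ x = x) :
    emb m n ⟨e, τ⟩ * Zo m n p = Zo m n p * emb m n ⟨e, τ⟩ := by
  have hmem : ∀ x : Fin n, p ≤ (x : ℕ) → p ≤ ((τ x : Fin n) : ℕ) := by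
    intro x hx
    by_contra h
    push_neg at h
    have h2 : τ x = x := τ.injective (hτ (τ x) h)
    rw [h2] at h; omega
  have hmem' : ∀ x : Fin n, p ≤ (x : ℕ) → p ≤ ((τ⁻¹ x : Fin n) : ℕ) := by
    intro x hx
    by_contra h
    push_neg at h
    have h2 : τ⁻¹ x = x := by
      have h3 := hτ (τ⁻¹ x) h
      rw [Equiv.Perm.coe_inv, Equiv.apply_symm_apply] at h3
      exact h3.symm
    rw [h2] at h; omega
  unfold Zo
  rw [Finset.mul_sum, Finset.sum_mul]
  have step : ∀ y ∈ Q m n p,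
      emb m n ⟨e, τ⟩ * emb m n (R m n y.1.1 y.1.2 y.2)
        = emb m n (R m n (τ y.1.1) (τ y.1.2)
            (y.2 + Multiplicative.toAdd (e (τ y.1.2)) - Multiplicative.toAdd (e (τ y.1.1)))
            * (⟨e, τ⟩ : Gm m n)) := by
    intro y hy
    have hne : y.1.1 ≠ y.1.2 := ((Finset.mem_filter.1 hy).2).2.2
    rw [← map_mul, conj e τ hne]
  rw [Finset.sum_congr rfl step]
  refine Finset.sum_nbij'
    (i := fun y => ((τ y.1.1, τ y.1.2),
      y.2 + Multiplicative.toAdd (e (τ y.1.2)) - Multiplicative.toAdd (e (τ y.1.1))))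
    (j := fun y => ((τ⁻¹ y.1.1, τ⁻¹ y.1.2),
      y.2 - Multiplicative.toAdd (e y.1.2) + Multiplicative.toAdd (e y.1.1)))
    ?_ ?_ ?_ ?_ ?_
  · intro y hy
    obtain ⟨-, h1, h2, h3⟩ := Finset.mem_filter.1 hy
    refine Finset.mem_filter.2 ⟨Finset.mem_univ _, hmem _ h1, hmem _ h2, fun h => h3 (τ.injective h)⟩
  · intro y hy
    obtain ⟨-, h1, h2, h3⟩ := Finset.mem_filter.1 hy
    refine Finset.mem_filter.2 ⟨Finset.mem_univ _, hmem' _ h1, hmem' _ h2,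
      fun h => h3 (τ⁻¹.injective h)⟩
  · intro y _
    ext <;> simp
    · ring
  · intro y _
    ext <;> simp
    · ring
  · intro y _
    rw [map_mul]

lemma Zo_comm_JMr (p : ℕ) (j : Fin n) (hpj : p ≤ (j : ℕ)) :
    Zo m n p * JMr m n j = JMr m n j * Zo m n p := by
  rw [JMr_eq, Finset.mul_sum, Finset.sum_mul]
  refine Finset.sum_congr rfl fun k hk => ?_
  have hjk : j < k := (Finset.mem_filter.1 hk).2
  rw [Finset.mul_sum, Finset.sum_mul]
  refine Finset.sum_congr rfl fun c _ => ?_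
  have hτ : ∀ x : Fin n, (x : ℕ) < p → Equiv.swap j k x = x := by
    intro x hx
    have h1 : x ≠ j := by
      intro h; subst h; omega
    have h2 : x ≠ k := by
      intro h; subst h
      have := hjk
      rw [Fin.lt_def] at this
      omega
    exact Equiv.swap_apply_of_ne_of_ne h1 h2
  exact (emb_mk_comm_Zo p (F m n j k c) (Equiv.swap j k) hτ).symm

lemma Zo_split (i : Fin n) :
    Zo m n (i : ℕ) = Zo m n ((i : ℕ) + 1) + 2 • JMr m n i := by
  have hsub : Q m n ((i : ℕ) + 1) ⊆ Q m n (i : ℕ) := by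
    intro y hy
    obtain ⟨-, h1, h2, h3⟩ := Finset.mem_filter.1 hy
    exact Finset.mem_filter.2 ⟨Finset.mem_univ _, by omega, by omega, h3⟩
  have hsplit := Finset.sum_sdiff (f := fun y => emb m n (R m n y.1.1 y.1.2 y.2)) hsub
  have hD : Q m n (i : ℕ) \ Q m n ((i : ℕ) + 1)
      = (({i} ×ˢ Finset.univ.filter (fun l => i < l)) ×ˢ (Finset.univ : Finset (ZMod m)))
        ∪ ((Finset.univ.filter (fun k => i < k) ×ˢ {i}) ×ˢ (Finset.univ : Finset (ZMod m))) := by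
    ext ⟨⟨k, l⟩, c⟩
    simp only [Finset.mem_sdiff, Finset.mem_filter, Finset.mem_univ, true_and, Finset.mem_union,
      Finset.mem_product, Finset.mem_singleton, Q, Fin.lt_def, Ne, Fin.ext_iff, and_true]
    omega
  have hdisj : Disjoint
      ((({i} ×ˢ Finset.univ.filter (fun l => i < l)) ×ˢ (Finset.univ : Finset (ZMod m))))
      (((Finset.univ.filter (fun k => i < k) ×ˢ {i}) ×ˢ (Finset.univ : Finset (ZMod m)))) := by
    rw [Finset.disjoint_left]
    rintro ⟨⟨k, l⟩, c⟩ h1 h2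
    simp only [Finset.mem_product, Finset.mem_singleton, Finset.mem_filter, Finset.mem_univ,
      true_and, and_true] at h1 h2
    rw [h2.2] at h1
    exact lt_irrefl i h1.2
  have hD1 : ∑ y ∈ (({i} ×ˢ Finset.univ.filter (fun l => i < l)) ×ˢ
        (Finset.univ : Finset (ZMod m))), emb m n (R m n y.1.1 y.1.2 y.2) = JMr m n i := by
    rw [Finset.sum_product, Finset.sum_product, Finset.sum_singleton, JMr_eq]
  have hD2 : ∑ y ∈ ((Finset.univ.filter (fun k => i < k) ×ˢ {i}) ×ˢ
        (Finset.univ : Finset (ZMod m))), emb m n (R m n y.1.1 y.1.2 y.2) = JMr m n i := by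
    rw [Finset.sum_product, Finset.sum_product, JMr_eq]
    refine Finset.sum_congr rfl fun k hk => ?_
    rw [Finset.sum_singleton]
    have hik : i ≠ k := ne_of_lt (Finset.mem_filter.1 hk).2
    calc ∑ c : ZMod m, emb m n (R m n k i c)
        = ∑ c : ZMod m, emb m n (R m n i k (-c)) := by
          exact Finset.sum_congr rfl fun c _ => by rw [R_symm hik.symm]
      _ = ∑ c : ZMod m, emb m n (R m n i k c) :=
          sum_zmod_neg (fun c => emb m n (R m n i k c))
  have : Zo m n (i : ℕ) = Zo m n ((i : ℕ) + 1)
      + ∑ y ∈ Q m n (i : ℕ) \ Q m n ((i : ℕ) + 1), emb m n (R m n y.1.1 y.1.2 y.2) := by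
    unfold Zo
    exact hsplit.symm.trans (add_comm _ _)
  rw [this, hD, Finset.sum_union hdisj, hD1, hD2, two_smul]

end mpos

end RevJM

/-- The reverse Jucys–Murphy elements of `G(m,1,n)` pairwise commute. -/
theorem reverseJucysMurphy_commute (m n : ℕ) (i j : Fin n) :
    JMr m n i * JMr m n j = JMr m n j * JMr m n i := by
  rcases Nat.eq_zero_or_pos m with rfl | hm
  · have h0 : ∀ a : Fin n, JMr 0 n a = 0 := fun a => by simp [JMr]
    rw [h0, h0]
  · haveI : NeZero m := ⟨hm.ne'⟩
    have key : ∀ a b : Fin n, a < b →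
        JMr m n a * JMr m n b = JMr m n b * JMr m n a := by
      intro a b hab
      have hab' : (a : ℕ) < (b : ℕ) := Fin.lt_def.1 hab
      have h1 := RevJM.Zo_comm_JMr (m := m) (n := n) (a : ℕ) b (le_of_lt hab')
      have h2 := RevJM.Zo_comm_JMr (m := m) (n := n) ((a : ℕ) + 1) b (by omega)
      have hs : (2 : ℕ) • JMr m n a = RevJM.Zo m n (a : ℕ) - RevJM.Zo m n ((a : ℕ) + 1) := by
        rw [RevJM.Zo_split a]; abel
      have e2 : (2 : ℕ) • (JMr m n a * JMr m n b) = (2 : ℕ) • (JMr m n b * JMr m n a) := by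
        rw [← smul_mul_assoc, ← mul_smul_comm, hs, sub_mul, mul_sub, h1, h2]
      rw [← Nat.cast_smul_eq_nsmul ℂ, ← Nat.cast_smul_eq_nsmul ℂ] at e2
      have e3 := congrArg (fun z => ((2 : ℂ))⁻¹ • z) e2
      simpa [smul_smul, inv_mul_cancel₀] using e3
    rcases lt_trichotomy i j with h | rfl | h
    · exact key i j h
    · rfl
    · exact (key j i h).symm
end
end

section
/- Let Z be a real inner product space with basis {α̌_1,...,α̌_n} satisfying (α̌_i, α̌_j) ≤ 0 for i ≠ j, and dual basis {β_1,...,β_n}. For a subset F ⊆ {1,...,n} let S_F = { Σ_{j∉F} c_j β_j − Σ_{i∈F} d_i α̌_i : c_j > 0, d_i ≥ 0 }. Then every x ∈ Z lies in S_F for exactly one subset F. -/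
open scoped BigOperators RealInnerProductSpace

section LanglandsAux

variable {Z : Type*} [NormedAddCommGroup Z] [InnerProductSpace ℝ Z] {n : ℕ}

/-- inner product of `α j` with a linear combination of the dual family. -/
lemma LL.inner_alpha_sum {α β : Fin n → Z}
    (hdual : ∀ i j, ⟪α i, β j⟫ = if i = j then 1 else 0)
    (j : Fin n) (S : Finset (Fin n)) (c : Fin n → ℝ) :
    ⟪α j, ∑ k ∈ S, c k • β k⟫ = if j ∈ S then c j else 0 := by
  rw [inner_sum]
  simp only [real_inner_smul_right, hdual, mul_ite, mul_one, mul_zero]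
  exact Finset.sum_ite_eq S j c

/-- inner product of combinations of the two dual families. -/
lemma LL.inner_pq {α β : Fin n → Z}
    (hdual : ∀ i j, ⟪α i, β j⟫ = if i = j then 1 else 0)
    (S T : Finset (Fin n)) (c d : Fin n → ℝ) :
    ⟪∑ j ∈ S, c j • β j, ∑ i ∈ T, d i • α i⟫ = ∑ j ∈ S ∩ T, c j * d j := by
  rw [sum_inner]
  have hterm : ∀ j, ⟪c j • β j, ∑ i ∈ T, d i • α i⟫
      = if j ∈ T then c j * d j else 0 := by
    intro j
    rw [real_inner_smul_left, inner_sum]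
    have hba : ∀ i, ⟪β j, α i⟫ = if i = j then 1 else 0 := fun i => by
      rw [real_inner_comm]; exact hdual i j
    simp only [real_inner_smul_right, hba, mul_ite, mul_one, mul_zero]
    rw [Finset.sum_ite_eq' T j d]
    split <;> simp [mul_comm]
  simp only [hterm]
  rw [← Finset.sum_filter, Finset.filter_mem_eq_inter]

/-- uniqueness half: one inclusion between the two index sets. -/
lemma LL.subset {α β : Fin n → Z}
    (hdual : ∀ i j, ⟪α i, β j⟫ = if i = j then 1 else 0)
    {F G : Finset (Fin n)} {c d c' d' : Fin n → ℝ}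
    (hc : ∀ j ∈ Fᶜ, 0 < c j) (hd : ∀ i ∈ F, 0 ≤ d i)
    (hc' : ∀ j ∈ Gᶜ, 0 < c' j) (hd' : ∀ i ∈ G, 0 ≤ d' i)
    (hx : (∑ j ∈ Fᶜ, c j • β j) - ∑ i ∈ F, d i • α i
        = (∑ j ∈ Gᶜ, c' j • β j) - ∑ i ∈ G, d' i • α i) :
    G ⊆ F := by
  set pF := ∑ j ∈ Fᶜ, c j • β j with hpF
  set qF := ∑ i ∈ F, d i • α i with hqF
  set pG := ∑ j ∈ Gᶜ, c' j • β j with hpG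
  set qG := ∑ i ∈ G, d' i • α i with hqG
  have hsub : pF - pG = qF - qG := sub_eq_sub_iff_sub_eq_sub.mp hx
  have h1 : ⟪pF, qF⟫ = 0 := by
    rw [hpF, hqF, LL.inner_pq hdual, show Fᶜ ∩ F = ∅ from by ext k; simp, Finset.sum_empty]
  have h2 : ⟪pG, qG⟫ = 0 := by
    rw [hpG, hqG, LL.inner_pq hdual, show Gᶜ ∩ G = ∅ from by ext k; simp, Finset.sum_empty]
  have h3 : 0 ≤ ⟪pF, qG⟫ := by
    rw [hpF, hqG, LL.inner_pq hdual]
    refine Finset.sum_nonneg fun j hj => ?_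
    rw [Finset.mem_inter] at hj
    exact mul_nonneg (hc j hj.1).le (hd' j hj.2)
  have h4 : 0 ≤ ⟪pG, qF⟫ := by
    rw [hpG, hqF, LL.inner_pq hdual]
    refine Finset.sum_nonneg fun j hj => ?_
    rw [Finset.mem_inter] at hj
    exact mul_nonneg (hc' j hj.1).le (hd j hj.2)
  have hkey : ⟪pF - pG, pF - pG⟫ = ⟪pF - pG, qF - qG⟫ :=
    congrArg (fun z => ⟪pF - pG, z⟫) hsub
  have hexp : ⟪pF - pG, qF - qG⟫ ≤ 0 := by
    rw [inner_sub_left, inner_sub_right, inner_sub_right, h1, h2]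
    have h5 : 0 ≤ ⟪pG, qG⟫ := le_of_eq h2.symm
    linarith [real_inner_comm pG qF, real_inner_comm pF qG]
  have hzero : pF - pG = 0 := by
    have hnn : (0:ℝ) ≤ ⟪pF - pG, pF - pG⟫ := real_inner_self_nonneg
    have : ⟪pF - pG, pF - pG⟫ = 0 := le_antisymm (hkey ▸ hexp) hnn
    exact inner_self_eq_zero.mp this
  have hpp : pF = pG := sub_eq_zero.mp hzero
  intro j hjG
  by_contra hjF
  have hjFc : j ∈ Fᶜ := Finset.mem_compl.mpr hjF
  have hA : ⟪α j, pF⟫ = c j := by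
    rw [hpF, LL.inner_alpha_sum hdual, if_pos hjFc]
  have hB : ⟪α j, pG⟫ = 0 := by
    rw [hpG, LL.inner_alpha_sum hdual, if_neg (by simpa using hjG)]
  rw [hpp, hB] at hA
  exact absurd hA.symm (ne_of_gt (hc j hjFc))

/-- expansion of any vector in the basis `α` with coefficients from the dual family. -/
lemma LL.repr_eq (α : Module.Basis (Fin n) ℝ Z) (β : Fin n → Z)
    (hdual : ∀ i j, ⟪(α : Fin n → Z) i, β j⟫ = if i = j then 1 else 0)
    (v : Z) : v = ∑ i, ⟪v, β i⟫ • (α : Fin n → Z) i := by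
  have hco : ∀ i, ⟪v, β i⟫ = α.repr v i := by
    intro i
    conv_lhs => rw [← Module.Basis.sum_repr α v]
    rw [sum_inner]
    simp only [real_inner_smul_left, hdual, mul_ite, mul_one, mul_zero]
    rw [Finset.sum_ite_eq' Finset.univ i (fun j => α.repr v j)]
    simp
  simp only [hco]
  exact (Module.Basis.sum_repr α v).symm

end LanglandsAux

/-- Langlands' lemma (Borel–Wallach IV.6.11): if `{α̌_i}` is a basis of a real inner
product space with pairwise nonpositive inner products and `{β_j}` is the dual basis,
then every `x` has a unique decomposition
`x = Σ_{j∉F} c_j β_j − Σ_{i∈F} d_i α̌_i` with `c_j > 0`, `d_i ≥ 0`. -/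
theorem langlands_unique_decomposition {Z : Type*} [NormedAddCommGroup Z]
    [InnerProductSpace ℝ Z] {n : ℕ} (α : Module.Basis (Fin n) ℝ Z) (β : Fin n → Z)
    (hneg : ∀ i j, i ≠ j → ⟪α i, α j⟫ ≤ 0)
    (hdual : ∀ i j, ⟪α i, β j⟫ = if i = j then 1 else 0)
    (x : Z) :
    ∃! F : Finset (Fin n), ∃ c d : Fin n → ℝ,
      (∀ j ∈ Fᶜ, 0 < c j) ∧ (∀ i ∈ F, 0 ≤ d i) ∧
      x = (∑ j ∈ Fᶜ, c j • β j) - ∑ i ∈ F, d i • α i := by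
  classical
  haveI : FiniteDimensional ℝ Z := α.finiteDimensional_of_finite
  -- the linear map sending coefficients to combinations of β
  set L : (Fin n → ℝ) →ₗ[ℝ] Z := Fintype.linearCombination ℝ β with hL
  have hLapp : ∀ c : Fin n → ℝ, L c = ∑ j, c j • β j := fun c => rfl
  have hLinj : LinearMap.ker L = ⊥ := by
    rw [LinearMap.ker_eq_bot']
    intro m hm
    funext i
    have := congrArg (fun z => ⟪α i, z⟫) (hLapp m ▸ hm)
    simpa [inner_sum, real_inner_smul_right, hdual, mul_ite, mul_one, mul_zero,
      Finset.sum_ite_eq] using this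
  -- the cone K generated by the β's
  set K : Set Z := L '' {c : Fin n → ℝ | ∀ j, 0 ≤ c j} with hK
  have hKclosed : IsClosed K :=
    (LinearMap.isClosedEmbedding_of_injective hLinj).isClosedMap _ <| by
      have : {c : Fin n → ℝ | ∀ j, 0 ≤ c j} = ⋂ j, {c : Fin n → ℝ | 0 ≤ c j} := by
        ext c; simp
      rw [this]
      exact isClosed_iInter fun j => isClosed_le continuous_const (continuous_apply j)
  have hKconv : Convex ℝ K := by
    rintro y ⟨cy, hcy, rfl⟩ z ⟨cz, hcz, rfl⟩ a b ha hb hab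
    refine ⟨a • cy + b • cz, fun j => ?_, by simp [map_add, map_smul]⟩
    exact add_nonneg (mul_nonneg ha (hcy j)) (mul_nonneg hb (hcz j))
  have hKne : K.Nonempty := ⟨L 0, ⟨0, fun j => le_refl 0, rfl⟩⟩
  -- projection of x onto K
  obtain ⟨p, hpK, hmin⟩ :=
    exists_norm_eq_iInf_of_complete_convex hKne (hKclosed.isComplete) hKconv x
  have hproj : ∀ w ∈ K, ⟪x - p, w - p⟫ ≤ 0 :=
    (norm_eq_iInf_iff_real_inner_le_zero hKconv hpK).mp hmin
  obtain ⟨c, hc0, hcp⟩ := hpK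
  have hcp' : p = ∑ j, c j • β j := by rw [← hcp, hLapp]
  -- inner products of x - p with the β's are nonpositive
  have hβle : ∀ j, ⟪x - p, β j⟫ ≤ 0 := by
    intro j
    have hw : p + β j ∈ K := by
      refine ⟨fun k => c k + if k = j then 1 else 0, fun k => ?_, ?_⟩
      · show 0 ≤ c k + if k = j then 1 else 0
        have := hc0 k; split <;> linarith
      · rw [hLapp]
        simp only [add_smul, Finset.sum_add_distrib, ite_smul, one_smul, zero_smul,
          Finset.sum_ite_eq' Finset.univ j, Finset.mem_univ, if_true]
        rw [hcp']
    have := hproj _ hw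
    simpa [add_sub_cancel_left] using this
  -- orthogonality ⟪x - p, p⟫ = 0
  have hop : ⟪x - p, p⟫ = 0 := by
    have h1 : ⟪x - p, -p⟫ ≤ 0 := by
      have hw : (0:Z) ∈ K := ⟨0, fun j => le_refl 0, by rw [hLapp]; simp⟩
      simpa [zero_sub] using hproj 0 hw
    have h2 : ⟪x - p, p⟫ ≤ 0 := by
      have hw : p + p ∈ K := by
        refine ⟨fun k => c k + c k, fun k => by show 0 ≤ c k + c k; have := hc0 k; linarith, ?_⟩
        rw [hLapp]
        simp only [add_smul, Finset.sum_add_distrib]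
        rw [hcp']
      simpa [add_sub_cancel_left] using hproj _ hw
    rw [inner_neg_right] at h1
    linarith
  -- define d
  set d : Fin n → ℝ := fun i => -⟪x - p, β i⟫ with hd
  have hd0 : ∀ i, 0 ≤ d i := fun i => neg_nonneg.mpr (hβle i)
  have hxpd : x - p = -∑ i, d i • α i := by
    have := LL.repr_eq α β hdual (x - p)
    rw [this, ← Finset.sum_neg_distrib]
    refine Finset.sum_congr rfl fun i _ => ?_
    rw [hd, ← neg_smul, neg_neg]
  -- complementarity: c j * d j = 0 for all j
  have hcompl : ∀ j, c j * d j = 0 := by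
    have key : ∑ j, c j * d j = -⟪x - p, p⟫ := by
      simp only [hd, mul_neg, Finset.sum_neg_distrib]
      congr 1
      generalize x - p = y
      rw [hcp', inner_sum]
      simp only [real_inner_smul_right]
    have hsum : ∑ j, c j * d j = 0 := by rw [key, hop, neg_zero]
    intro j
    exact (Finset.sum_eq_zero_iff_of_nonneg
      (fun j _ => mul_nonneg (hc0 j) (hd0 j))).mp hsum j (Finset.mem_univ j)
  -- the index set
  set F : Finset (Fin n) := Finset.univ.filter (fun j => c j = 0) with hF
  have hmemF : ∀ j, j ∈ F ↔ c j = 0 := by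
    intro j; simp [hF]
  have hmemFc : ∀ j, j ∈ Fᶜ ↔ c j ≠ 0 := by
    intro j; simp [Finset.mem_compl, hmemF]
  have hxdecomp : x = (∑ j ∈ Fᶜ, c j • β j) - ∑ i ∈ F, d i • α i := by
    have e1 : ∑ j ∈ Fᶜ, c j • β j = ∑ j, c j • β j := by
      refine Finset.sum_subset (Finset.subset_univ _) fun j _ hj => ?_
      have : c j = 0 := by
        by_contra hne
        exact hj ((hmemFc j).mpr hne)
      rw [this, zero_smul]
    have e2 : ∑ i ∈ F, d i • α i = ∑ i, d i • α i := by
      refine Finset.sum_subset (Finset.subset_univ _) fun i _ hi => ?_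
      have hci : c i ≠ 0 := by
        by_contra h
        exact hi ((hmemF i).mpr h)
      have : d i = 0 := by
        have := hcompl i
        rcases mul_eq_zero.mp this with h | h
        · exact absurd h hci
        · exact h
      rw [this, zero_smul]
    rw [e1, e2, ← hcp']
    have : x = p + (x - p) := by abel
    rw [this, hxpd]
    abel
  refine ⟨F, ⟨c, d, ?_, fun i _ => hd0 i, hxdecomp⟩, ?_⟩
  · intro j hj
    exact lt_of_le_of_ne (hc0 j) (Ne.symm ((hmemFc j).mp hj))
  · rintro G ⟨c', d', hc', hd', hx'⟩
    have hcF : ∀ j ∈ Fᶜ, 0 < c j := fun j hj =>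
      lt_of_le_of_ne (hc0 j) (Ne.symm ((hmemFc j).mp hj))
    have hdF : ∀ i ∈ F, 0 ≤ d i := fun i _ => hd0 i
    have hx2 : (∑ j ∈ Fᶜ, c j • β j) - ∑ i ∈ F, d i • α i
        = (∑ j ∈ Gᶜ, c' j • β j) - ∑ i ∈ G, d' i • α i := by
      rw [← hxdecomp, hx']
    exact Finset.Subset.antisymm
      (LL.subset hdual hcF hdF hc' hd' hx2)
      (LL.subset hdual hc' hd' hcF hdF hx2.symm)
end

section
/- Let Z be as in the Langlands setting: basis {α̌_i} with pairwise nonpositive inner products, dual basis {β_j}, and for x ∈ Z write x uniquely as Σ_{j∉F(x)} c_j β_j − Σ_{i∈F(x)} d_i α̌_i with c_j > 0, d_i ≥ 0, and set x_0 = Σ_{j∉F(x)} c_j β_j. Define x ≥ y iff x − y is a nonnegative combination of the α̌_i. Then x ≥ y implies x_0 ≥ y_0. -/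
open scoped BigOperators RealInnerProductSpace

/-- Borel–Wallach IV.6.13: in the Langlands setting, if `x ≥ y` (i.e. `x − y` is a
nonnegative combination of the `α̌_i`), and `x₀`, `y₀` denote the `β`-parts of the
unique decompositions `x = Σ_{j∉F(x)} c_j β_j − Σ_{i∈F(x)} d_i α̌_i` (with `c_j > 0`,
`d_i ≥ 0`) and similarly for `y`, then `x₀ ≥ y₀`. -/
theorem langlands_beta_part_monotone {Z : Type*} [NormedAddCommGroup Z]
    [InnerProductSpace ℝ Z] {n : ℕ} (α : Module.Basis (Fin n) ℝ Z) (β : Fin n → Z)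
    (hneg : ∀ i j, i ≠ j → ⟪α i, α j⟫ ≤ 0)
    (hdual : ∀ i j, ⟪α i, β j⟫ = if i = j then 1 else 0)
    (x y : Z) (F G : Finset (Fin n)) (c d c' d' : Fin n → ℝ)
    (hcx : ∀ j ∈ Fᶜ, 0 < c j) (hdx : ∀ i ∈ F, 0 ≤ d i)
    (hx : x = (∑ j ∈ Fᶜ, c j • β j) - ∑ i ∈ F, d i • α i)
    (hcy : ∀ j ∈ Gᶜ, 0 < c' j) (hdy : ∀ i ∈ G, 0 ≤ d' i)
    (hy : y = (∑ j ∈ Gᶜ, c' j • β j) - ∑ i ∈ G, d' i • α i)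
    (hxy : ∃ t : Fin n → ℝ, (∀ i, 0 ≤ t i) ∧ x - y = ∑ i, t i • α i) :
    ∃ t : Fin n → ℝ, (∀ i, 0 ≤ t i) ∧
      (∑ j ∈ Fᶜ, c j • β j) - (∑ j ∈ Gᶜ, c' j • β j) = ∑ i, t i • α i := by
  obtain ⟨t, ht, hxy⟩ := hxy
  set s : Fin n → ℝ :=
    fun i => t i + (if i ∈ F then d i else 0) - (if i ∈ G then d' i else 0) with hs
  have hext : ∀ (E : Finset (Fin n)) (f : Fin n → ℝ),
      ∑ i ∈ E, f i • α i = ∑ i, (if i ∈ E then f i else 0) • α i := by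
    intro E f
    simp [ite_smul, Finset.sum_ite_mem]
  -- decomposition of the difference of beta-parts
  have hdecomp : (∑ j ∈ Fᶜ, c j • β j) - (∑ j ∈ Gᶜ, c' j • β j) = ∑ i, s i • α i := by
    have hstep : (∑ j ∈ Fᶜ, c j • β j) - (∑ j ∈ Gᶜ, c' j • β j)
        = (x - y) + (∑ i ∈ F, d i • α i) - (∑ i ∈ G, d' i • α i) := by
      rw [hx, hy]; abel
    rw [hstep, hxy, hext F d, hext G d']
    simp [hs, add_smul, sub_smul, Finset.sum_add_distrib, Finset.sum_sub_distrib]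
  -- inner products of α with beta-parts
  have hinner : ∀ (E : Finset (Fin n)) (f : Fin n → ℝ) (i : Fin n),
      ⟪α i, ∑ j ∈ Eᶜ, f j • β j⟫ = if i ∈ Eᶜ then f i else 0 := by
    intro E f i
    rw [inner_sum]
    simp [real_inner_smul_right, hdual, mul_ite, Finset.sum_ite_eq]
  -- the key positivity claim
  have key : ∀ i, 0 ≤ s i := by
    by_contra hcon
    push_neg at hcon
    set N : Finset (Fin n) := Finset.univ.filter (fun i => s i < 0) with hN
    have hNne : N.Nonempty := by
      obtain ⟨i, hi⟩ := hcon
      exact ⟨i, by simp [hN, hi]⟩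
    set z : Z := ∑ i ∈ N, s i • α i with hz
    have hmemN : ∀ j, j ∈ N ↔ s j < 0 := by intro j; simp [hN]
    have hNG : ∀ j ∈ N, j ∈ G := by
      intro j hj
      rw [hmemN] at hj
      by_contra hjG
      have h1 := ht j
      have h2 : (0:ℝ) ≤ if j ∈ F then d j else 0 := by
        split
        · exact hdx j ‹_›
        · exact le_rfl
      have hj' : (t j + if j ∈ F then d j else 0) - (if j ∈ G then d' j else 0) < 0 := hj
      rw [if_neg hjG] at hj'
      linarith
    -- upper bound : ⟪∑ s α, z⟫ ≤ 0
    have hub : ⟪∑ i, s i • α i, z⟫ ≤ 0 := by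
      rw [← hdecomp, hz, inner_sum]
      apply Finset.sum_nonpos
      intro j hj
      rw [real_inner_smul_right]
      have hsj : s j < 0 := (hmemN j).mp hj
      have hinner_j : ⟪(∑ j ∈ Fᶜ, c j • β j) - (∑ j ∈ Gᶜ, c' j • β j), α j⟫
          = (if j ∈ Fᶜ then c j else 0) - (if j ∈ Gᶜ then c' j else 0) := by
        have hA : ⟪(∑ k ∈ Fᶜ, c k • β k), α j⟫ = if j ∈ Fᶜ then c j else 0 := by
          rw [real_inner_comm]; exact hinner F c j
        have hB : ⟪(∑ k ∈ Gᶜ, c' k • β k), α j⟫ = if j ∈ Gᶜ then c' j else 0 := by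
          rw [real_inner_comm]; exact hinner G c' j
        rw [inner_sub_left, hA, hB]
      rw [hinner_j]
      have hGj : (if j ∈ Gᶜ then c' j else 0) = 0 := by
        rw [if_neg]
        simp only [Finset.mem_compl, not_not]
        exact hNG j hj
      rw [hGj, sub_zero]
      have hF : (0:ℝ) ≤ if j ∈ Fᶜ then c j else 0 := by
        split
        · exact le_of_lt (hcx j ‹_›)
        · exact le_refl 0
      exact mul_nonpos_of_nonpos_of_nonneg (le_of_lt hsj) hF
    -- lower bound : ‖z‖^2 ≤ ⟪∑ s α, z⟫
    have hsplit : (∑ i, s i • α i) = (∑ i ∈ Nᶜ, s i • α i) + z := by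
      rw [hz, add_comm, Finset.sum_add_sum_compl]
    have hwz : 0 ≤ ⟪∑ i ∈ Nᶜ, s i • α i, z⟫ := by
      rw [hz, sum_inner]
      apply Finset.sum_nonneg
      intro i hi
      rw [inner_sum]
      apply Finset.sum_nonneg
      intro j hj
      rw [real_inner_smul_left, real_inner_smul_right]
      have hsi : 0 ≤ s i := by
        rw [Finset.mem_compl, hmemN] at hi
        linarith [not_lt.mp hi]
      have hsj : s j < 0 := (hmemN j).mp hj
      have hij : i ≠ j := by
        rintro rfl
        exact (Finset.mem_compl.mp hi) hj
      have hab := hneg i j hij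
      have h0 : 0 ≤ s j * ⟪α i, α j⟫ := by
        have h1 := mul_nonneg (neg_nonneg.2 hsj.le) (neg_nonneg.2 hab)
        rwa [neg_mul_neg] at h1
      exact mul_nonneg hsi h0
    have hlb : ‖z‖^2 ≤ ⟪∑ i, s i • α i, z⟫ := by
      rw [hsplit, inner_add_left, ← real_inner_self_eq_norm_sq]
      linarith
    have hz0 : z = 0 := by
      have h1 : ‖z‖^2 ≤ 0 := le_trans hlb hub
      have h2 : (0:ℝ) ≤ ‖z‖^2 := sq_nonneg _
      have : ‖z‖ = 0 := by nlinarith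
      exact norm_eq_zero.mp this
    -- linear independence gives contradiction
    obtain ⟨i0, hi0⟩ := hNne
    have hsum0 : ∑ i, (if i ∈ N then s i else 0) • α i = 0 := by
      rw [← hext N s, ← hz, hz0]
    have hli := Fintype.linearIndependent_iff.mp α.linearIndependent
      (fun i => if i ∈ N then s i else 0) hsum0 i0
    rw [if_pos hi0] at hli
    exact absurd hli (ne_of_lt ((hmemN i0).mp hi0))
  exact ⟨s, key, hdecomp⟩
end
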